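/- Kadell's q-analog conjecture fails: for n = 2, I = {0}, J = {1}, a_0 = a_1 = a_2 = 1, one has CT_x [(1 - x_0/x_1)(1 - q x_1/x_0)(1 - q^2 x_1/x_0)(1 - x_0/x_2)(1 - q x_2/x_0)(1 - x_1/x_2)(1 - q x_2/x_1)] = 1 + 2q + 3q^2 + 2q^3, and consequently (1 - q^3)(1 + 2q + 3q^2 + 2q^3) ≠ (1 - q^4)(1 + q)(1 + q + q^2) as polynomials in q. -/

import Mathlib

open Finsupp Polynomial
noncomputable section
abbrev Lau := AddMonoidAlgebra (Polynomial ℚ) (Fin 3 →₀ ℤ)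
def q : Polynomial ℚ := Polynomial.X
def sc (c : Polynomial ℚ) : Lau := AddMonoidAlgebra.single 0 c
/-- the Laurent monomial `x_i / x_j` -/
def r (i j : Fin 3) : Lau := AddMonoidAlgebra.single (single i 1 - single j 1) 1
def CT (f : Lau) : Polynomial ℚ := f.coeff 0

/-! With `a = x₀/x₁` and `c = x₁/x₂` we have `x₀/x₂ = a c`, and the product is `F(a) G(ac) H(c)` with
`F(a) = (1 - a)(1 - q/a)(1 - q²/a)` and `G = H = (1 - t)(1 - q/t)`. Its constant term is
`∑ₖ [a⁻ᵏ]F · [tᵏ]G · [t⁻ᵏ]H = (1+q+q²)(1+q)² - (q+q²+q³)q - q = 1 + 2q + 3q² + 2q³`.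
Multiplied by `1 - q³` this is not `(1 - q⁴)(1 + q)(1 + q + q²)`: at `q = 2` the two sides are
`-231` and `-315`. -/

lemma CT_sub (f g : Lau) : CT (f - g) = CT f - CT g := by
  simp only [CT, AddMonoidAlgebra.coeff_sub, Finsupp.sub_apply]

lemma CT_single (v : Fin 3 →₀ ℤ) (c : Polynomial ℚ) :
    CT (AddMonoidAlgebra.single v c) = if v = 0 then c else 0 := by
  simp only [CT, AddMonoidAlgebra.coeff_single, Finsupp.single_apply]

lemma finsupp_fin_three_eq_zero_iff {M : Type*} [Zero M] (v : Fin 3 →₀ M) :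
    v = 0 ↔ v 0 = 0 ∧ v 1 = 0 ∧ v 2 = 0 := by
  simp [Finsupp.ext_iff, Fin.forall_fin_succ]

theorem CT_kadell_product :
    CT ((1 - r 0 1) * (1 - sc q * r 1 0) * (1 - sc (q^2) * r 1 0) *
        (1 - r 0 2) * (1 - sc q * r 2 0) * (1 - r 1 2) * (1 - sc q * r 2 1)) =
      1 + 2 * q + 3 * q^2 + 2 * q^3 := by
  simp only [sc, r, AddMonoidAlgebra.one_def, sub_mul, mul_sub, AddMonoidAlgebra.single_mul_single]
  simp only [CT_sub, CT_single, finsupp_fin_three_eq_zero_iff, Finsupp.coe_add, Finsupp.coe_sub,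
    Finsupp.coe_zero, Pi.add_apply, Pi.sub_apply, Pi.zero_apply, Finsupp.single_apply]
  norm_num +decide
  ring

theorem kadell_prediction_ne :
    (1 - q^3) * (1 + 2 * q + 3 * q^2 + 2 * q^3) ≠ (1 - q^4) * (1 + q) * (1 + q + q^2) := by
  intro h
  have h2 := congrArg (Polynomial.eval 2) h
  norm_num [q] at h2

/-- The counterexample to Kadell's q-analog conjecture:
`n = 2`, `I = {0}`, `J = {1}`, `a₀ = a₁ = a₂ = 1`. -/
theorem kadell_q_conjecture_fails :
    CT ((1 - r 0 1) * (1 - sc q * r 1 0) * (1 - sc (q^2) * r 1 0) *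
        (1 - r 0 2) * (1 - sc q * r 2 0) * (1 - r 1 2) * (1 - sc q * r 2 1)) =
      1 + 2 * q + 3 * q^2 + 2 * q^3 ∧
    (1 - q^3) * (1 + 2 * q + 3 * q^2 + 2 * q^3) ≠
      (1 - q^4) * (1 + q) * (1 + q + q^2) :=
  ⟨CT_kadell_product, kadell_prediction_ne⟩
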